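/- arXiv:2206.13017 — 4 statements merged into one kernel-verified Lean document; each statement's English description precedes it below -/
import Mathlib

section
/- Let N1, N2 be positive integers, L = {1,…,N1}×{1,…,N2}, and L_var ⊆ L. Let α : Fin N1 → ℕ, β : Fin N2 → ℕ, and γ : L_var → ℤ. If there exists a family of real numbers n(l1,l2) ≥ 0 for (l1,l2) ∈ L satisfying (i) ∑_{l2} n(l1,l2) = α(l1) for all l1, (ii) ∑_{l1} n(l1,l2) ≤ β(l2) for all l2, and (iii) n(l1,l2) = γ(l1,l2) for all (l1,l2) ∈ L_var, then there exists a family of integers n'(l1,l2) satisfying the same constraints (i)–(iii) with n'(l1,l2) ≥ 0. -/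
/-!
Subtracting the fixed entries leaves a nonnegative real plan that vanishes on `Lvar`, has
integral row sums and integral column capacities. Split row `i` into unit copies and column `j`
into unit slots, and let a copy of row `i` see the slots of the columns where row `i` carries
mass. Hall's condition holds because the mass carried by any set of rows fits into the capacity
of the columns it reaches; counting, for each pair of a row and a column, the copies matched into
that column gives an integral plan with the same row sums, no larger column sums and support
inside that of the real plan.
-/

open Finset Function

section Transport

variable {ι κ : Type*} [Fintype κ]

theorem sum_rows_le_sum_cols_of_support [Fintype ι] {x : ι → κ → ℝ} (hx : ∀ i j, 0 ≤ x i j)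
    (R : Finset ι) (C : Finset κ) (hRC : ∀ i ∈ R, ∀ j ∉ C, x i j = 0) :
    ∑ i ∈ R, ∑ j, x i j ≤ ∑ j ∈ C, ∑ i, x i j :=
  calc ∑ i ∈ R, ∑ j, x i j = ∑ i ∈ R, ∑ j ∈ C, x i j :=
        sum_congr rfl fun i hi =>
          (sum_subset (subset_univ C) fun j _ hj => hRC i hi j hj).symm
    _ = ∑ j ∈ C, ∑ i ∈ R, x i j := sum_comm
    _ ≤ ∑ j ∈ C, ∑ i, x i j :=
        sum_le_sum fun j _ =>
          sum_le_sum_of_subset_of_nonneg (subset_univ R) fun i _ _ => hx i j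

variable [DecidableEq κ] {a : ι → ℕ} {b : κ → ℕ}

def fiberCount (f : (Σ i, Fin (a i)) → Σ j, Fin (b j)) (i : ι) (j : κ) : ℕ :=
  #{k : Fin (a i) | (f ⟨i, k⟩).1 = j}

theorem sum_fiberCount_right (f : (Σ i, Fin (a i)) → Σ j, Fin (b j)) (i : ι) :
    ∑ j, fiberCount f i j = a i := by
  simpa [fiberCount] using (card_eq_sum_card_fiberwise (f := fun k : Fin (a i) => (f ⟨i, k⟩).1)
    (s := univ) (t := univ) fun _ _ => mem_univ _).symm

variable [Fintype ι]

theorem exists_injective_of_real_plan (x : ι → κ → ℝ) (hx : ∀ i j, 0 ≤ x i j)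
    (ha : ∀ i, (a i : ℝ) ≤ ∑ j, x i j) (hb : ∀ j, ∑ i, x i j ≤ b j) :
    ∃ f : (Σ i, Fin (a i)) → Σ j, Fin (b j), Injective f ∧ ∀ p, x p.1 (f p).1 ≠ 0 := by
  classical
  let t : (Σ i, Fin (a i)) → Finset (Σ j, Fin (b j)) := fun p => {q | x p.1 q.1 ≠ 0}
  suffices hall : ∀ S, #S ≤ #(S.biUnion t) by
    obtain ⟨f, hf, hft⟩ := (all_card_le_biUnion_card_iff_exists_injective t).mp hall
    exact ⟨f, hf, fun p => (mem_filter.mp (hft p)).2⟩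
  intro S
  set R := S.image Sigma.fst
  set C : Finset κ := {j | ∃ i ∈ R, x i j ≠ 0}
  have hS : #S ≤ ∑ i ∈ R, a i :=
    calc #S ≤ #(R.sigma fun i => (univ : Finset (Fin (a i)))) :=
          card_le_card fun p hp => mem_sigma.mpr ⟨mem_image_of_mem _ hp, mem_univ _⟩
      _ = ∑ i ∈ R, a i := by simp [card_sigma]
  have hmass : ∑ i ∈ R, a i ≤ ∑ j ∈ C, b j := by
    have hRC : ∀ i ∈ R, ∀ j ∉ C, x i j = 0 := fun i hi j hj => by
      by_contra hne
      exact hj (mem_filter.mpr ⟨mem_univ _, i, hi, hne⟩)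
    exact_mod_cast calc (∑ i ∈ R, a i : ℝ) ≤ ∑ i ∈ R, ∑ j, x i j := sum_le_sum fun i _ => ha i
      _ ≤ ∑ j ∈ C, ∑ i, x i j := sum_rows_le_sum_cols_of_support hx R C hRC
      _ ≤ ∑ j ∈ C, (b j : ℝ) := sum_le_sum fun j _ => hb j
  have hC : ∑ j ∈ C, b j ≤ #(S.biUnion t) :=
    calc ∑ j ∈ C, b j = #(C.sigma fun j => (univ : Finset (Fin (b j)))) := by simp [card_sigma]
      _ ≤ #(S.biUnion t) := card_le_card fun q hq => by
          obtain ⟨i, hiR, hne⟩ := (mem_filter.mp (mem_sigma.mp hq).1).2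
          obtain ⟨p, hpS, rfl⟩ := mem_image.mp hiR
          exact mem_biUnion.mpr ⟨p, hpS, mem_filter.mpr ⟨mem_univ _, hne⟩⟩
  exact hS.trans (hmass.trans hC)

theorem sum_fiberCount_left_le {f : (Σ i, Fin (a i)) → Σ j, Fin (b j)} (hf : Injective f)
    (j : κ) : ∑ i, fiberCount f i j ≤ b j := by
  classical
  have hsource : ∑ i, fiberCount f i j = #{p : Σ i, Fin (a i) | (f p).1 = j} := by
    rw [card_filter, ← univ_sigma_univ, sum_sigma]
    simp only [fiberCount, card_filter]
  have htarget : #{q : Σ j, Fin (b j) | q.1 = j} = b j := by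
    rw [card_filter, ← univ_sigma_univ, sum_sigma]
    simp [apply_ite Finset.card]
  rw [hsource, ← htarget]
  exact card_le_card_of_injOn f (fun p hp => by simpa using hp) hf.injOn

theorem exists_nat_plan_of_real_plan (x : ι → κ → ℝ) (hx : ∀ i j, 0 ≤ x i j)
    (ha : ∀ i, (a i : ℝ) ≤ ∑ j, x i j) (hb : ∀ j, ∑ i, x i j ≤ b j) :
    ∃ m : ι → κ → ℕ, (∀ i j, x i j = 0 → m i j = 0) ∧
      (∀ i, ∑ j, m i j = a i) ∧ ∀ j, ∑ i, m i j ≤ b j := by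
  obtain ⟨f, hf, hsupp⟩ := exists_injective_of_real_plan x hx ha hb
  refine ⟨fiberCount f, fun i j hij => ?_, sum_fiberCount_right f, sum_fiberCount_left_le hf⟩
  refine card_eq_zero.mpr (filter_eq_empty_iff.mpr fun k _ hk => hsupp ⟨i, k⟩ ?_)
  rwa [hk]

theorem exists_int_plan_of_real_plan (x : ι → κ → ℝ) (hx : ∀ i j, 0 ≤ x i j)
    (r : ι → ℤ) (c : κ → ℤ) (hr : ∀ i, ∑ j, x i j = r i) (hc : ∀ j, ∑ i, x i j ≤ c j) :
    ∃ m : ι → κ → ℤ, (∀ i j, 0 ≤ m i j) ∧ (∀ i j, x i j = 0 → m i j = 0) ∧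
      (∀ i, ∑ j, m i j = r i) ∧ ∀ j, ∑ i, m i j ≤ c j := by
  have hr0 : ∀ i, 0 ≤ r i := fun i => by
    exact_mod_cast (hr i ▸ sum_nonneg fun j _ => hx i j : (0 : ℝ) ≤ r i)
  have hc0 : ∀ j, 0 ≤ c j := fun j => by
    exact_mod_cast ((sum_nonneg fun i _ => hx i j).trans (hc j) : (0 : ℝ) ≤ c j)
  obtain ⟨m, hsupp, hrow, hcol⟩ := exists_nat_plan_of_real_plan (a := fun i => (r i).toNat)
    (b := fun j => (c j).toNat) x hx
    (fun i => by rw [hr i]; exact_mod_cast (Int.toNat_of_nonneg (hr0 i)).le)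
    (fun j => by rw [← Int.cast_natCast, Int.toNat_of_nonneg (hc0 j)]; exact hc j)
  refine ⟨fun i j => m i j, fun i j => by positivity, fun i j hij => by simp [hsupp i j hij],
    fun i => ?_, fun j => ?_⟩
  · rw [← Int.toNat_of_nonneg (hr0 i)]; beta_reduce; exact_mod_cast hrow i
  · rw [← Int.toNat_of_nonneg (hc0 j)]; beta_reduce; exact_mod_cast hcol j

end Transport

theorem integrality_lemma_general (N1 N2 : ℕ)
    (Lvar : Set (Fin N1 × Fin N2)) (α : Fin N1 → ℕ) (β : Fin N2 → ℕ)
    (γ : Fin N1 × Fin N2 → ℤ)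
    (h : ∃ n : Fin N1 → Fin N2 → ℝ,
      (∀ l1 l2, 0 ≤ n l1 l2) ∧
      (∀ l1, ∑ l2, n l1 l2 = (α l1 : ℝ)) ∧
      (∀ l2, ∑ l1, n l1 l2 ≤ (β l2 : ℝ)) ∧
      (∀ l1 l2, (l1, l2) ∈ Lvar → n l1 l2 = (γ (l1, l2) : ℝ))) :
    ∃ n' : Fin N1 → Fin N2 → ℤ,
      (∀ l1 l2, 0 ≤ n' l1 l2) ∧
      (∀ l1, ∑ l2, n' l1 l2 = (α l1 : ℤ)) ∧
      (∀ l2, ∑ l1, n' l1 l2 ≤ (β l2 : ℤ)) ∧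
      (∀ l1 l2, (l1, l2) ∈ Lvar → n' l1 l2 = γ (l1, l2)) := by
  classical
  obtain ⟨n, hn0, hrow, hcol, hfix⟩ := h
  let fixed : Fin N1 → Fin N2 → ℤ := fun i j => if (i, j) ∈ Lvar then γ (i, j) else 0
  let free : Fin N1 → Fin N2 → ℝ := fun i j => n i j - fixed i j
  have hfree_fix : ∀ i j, (i, j) ∈ Lvar → free i j = 0 := fun i j hij => by
    simp [free, fixed, hij, hfix i j hij]
  have hfree0 : ∀ i j, 0 ≤ free i j := fun i j => by
    by_cases hij : (i, j) ∈ Lvar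
    · exact (hfree_fix i j hij).ge
    · simpa [free, fixed, hij] using hn0 i j
  have hfixed0 : ∀ i j, 0 ≤ fixed i j := fun i j => by
    by_cases hij : (i, j) ∈ Lvar
    · have : (0 : ℝ) ≤ γ (i, j) := hfix i j hij ▸ hn0 i j
      simpa [fixed, hij] using this
    · simp [fixed, hij]
  obtain ⟨m, hm0, hm_fix, hm_row, hm_col⟩ := exists_int_plan_of_real_plan free hfree0
    (fun i => α i - ∑ j, fixed i j) (fun j => β j - ∑ i, fixed i j)
    (fun i => by simp only [free, sum_sub_distrib, hrow]; push_cast; rfl)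
    (fun j => by simp only [free, sum_sub_distrib]; push_cast; linarith [hcol j])
  refine ⟨fixed + m, fun i j => add_nonneg (hfixed0 i j) (hm0 i j), fun i => ?_, fun j => ?_,
    fun i j hij => by simp [fixed, hij, hm_fix i j (hfree_fix i j hij)]⟩
  · simp only [Pi.add_apply, sum_add_distrib, hm_row]; ring
  · simp only [Pi.add_apply, sum_add_distrib]; linarith [hm_col j]

/-- **Lemma 1 (integrality lemma).** If the transportation-type system with row sums
equal to `α`, column sums at most `β`, fixed integer values `γ` on `Lvar`, and
nonnegativity has a real solution, then it has an integer solution. -/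
theorem integrality_lemma (N1 N2 : ℕ) (hN1 : 0 < N1) (hN2 : 0 < N2)
    (Lvar : Set (Fin N1 × Fin N2)) (α : Fin N1 → ℕ) (β : Fin N2 → ℕ)
    (γ : Fin N1 × Fin N2 → ℤ)
    (h : ∃ n : Fin N1 → Fin N2 → ℝ,
      (∀ l1 l2, 0 ≤ n l1 l2) ∧
      (∀ l1, ∑ l2, n l1 l2 = (α l1 : ℝ)) ∧
      (∀ l2, ∑ l1, n l1 l2 ≤ (β l2 : ℝ)) ∧
      (∀ l1 l2, (l1, l2) ∈ Lvar → n l1 l2 = (γ (l1, l2) : ℝ))) :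
    ∃ n' : Fin N1 → Fin N2 → ℤ,
      (∀ l1 l2, 0 ≤ n' l1 l2) ∧
      (∀ l1, ∑ l2, n' l1 l2 = (α l1 : ℤ)) ∧
      (∀ l2, ∑ l1, n' l1 l2 ≤ (β l2 : ℤ)) ∧
      (∀ l1 l2, (l1, l2) ∈ Lvar → n' l1 l2 = γ (l1, l2)) :=
  integrality_lemma_general N1 N2 Lvar α β γ h
end

section
/- Let N1, N2 be positive integers, L = {1,…,N1}×{1,…,N2}, L_var ⊆ L, α : Fin N1 → ℕ, β : Fin N2 → ℕ, γ : L_var → ℤ, and U : L → ℕ with U(l1,l2) > 0. If there exists a real-valued family n(l1,l2) with 0 ≤ n(l1,l2) ≤ U(l1,l2) for all (l1,l2) ∈ L satisfying ∑_{l2} n(l1,l2) = α(l1) for all l1, ∑_{l1} n(l1,l2) ≤ β(l2) for all l2, and n = γ on L_var, then there exists an integer-valued family n' satisfying the same constraints including the upper bounds U. -/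
/-!
Adjoining a slack row turns the column inequalities into equalities, so it suffices to round a
real matrix with integer row sums, integer column sums and integer entrywise bounds. Let `F` be
the set of its non-integral entries. A row or column with an integral sum cannot contain exactly
one non-integral entry, so `F` meets at most `#F / 2` rows and `#F / 2` columns, and the
row and column sum map on matrices supported on `F` has a nonzero kernel vector `w`. Moving
along `w` until the first entry of `F` reaches its floor or ceiling keeps every constraint and
shrinks `F`.
-/

open Finset

section Kernel

variable {R C : Type*} [Fintype R] [Fintype C] [DecidableEq R] [DecidableEq C]

theorem exists_ne_zero_rowSum_colSum_eq_zero {K : Type*} [Field K] (F : Finset (R × C))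
    (hF : F.Nonempty) (hcard : #(F.image Prod.fst) + #(F.image Prod.snd) ≤ #F) :
    ∃ w : R → C → K, w ≠ 0 ∧ (∀ i j, (i, j) ∉ F → w i j = 0) ∧
      (∀ i, ∑ j, w i j = 0) ∧ (∀ j, ∑ i, w i j = 0) := by
  obtain ⟨i₀, hi₀⟩ := hF.image Prod.fst
  let extend := Function.ExtendByZero.linearMap K ((↑) : F → R × C)
  let rowSums : (R × C → K) →ₗ[K] (F.image Prod.fst).erase i₀ → K :=
    LinearMap.pi fun i => ∑ j, LinearMap.proj ((i : R), j)
  let colSums : (R × C → K) →ₗ[K] F.image Prod.snd → K :=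
    LinearMap.pi fun j => ∑ i, LinearMap.proj (i, (j : C))
  -- The row sum at `i₀` is left out: it is forced by the others and the column sums.
  have hker : LinearMap.ker ((rowSums.prod colSums) ∘ₗ extend) ≠ ⊥ := by
    apply LinearMap.ker_ne_bot_of_finrank_lt
    simp only [Module.finrank_prod, Module.finrank_fintype_fun_eq_card, Fintype.card_coe,
      card_erase_of_mem hi₀]
    have := card_pos.2 (hF.image Prod.fst)
    omega
  obtain ⟨z, hz, hz0⟩ := Submodule.exists_mem_ne_zero_of_ne_bot hker
  replace hz := LinearMap.mem_ker.1 hz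
  set w := Function.curry (extend z)
  have hwF : ∀ i j, (i, j) ∉ F → w i j = 0 := fun i j h =>
    Function.extend_apply' _ _ _ fun ⟨e, he⟩ => h (he ▸ e.2)
  have hcol : ∀ j, ∑ i, w i j = 0 := by
    intro j
    by_cases hj : j ∈ F.image Prod.snd
    · simpa [colSums, w] using congr_fun (congr_arg Prod.snd hz) ⟨j, hj⟩
    · exact sum_eq_zero fun i _ => hwF i j fun h => hj (mem_image_of_mem Prod.snd h)
  have hrow : ∀ i ≠ i₀, ∑ j, w i j = 0 := by
    intro i hi
    by_cases hi' : i ∈ F.image Prod.fst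
    · simpa [rowSums, w] using congr_fun (congr_arg Prod.fst hz) ⟨i, mem_erase.2 ⟨hi, hi'⟩⟩
    · exact sum_eq_zero fun j _ => hwF i j fun h => hi' (mem_image_of_mem Prod.fst h)
  have hrow₀ : ∑ j, w i₀ j = 0 := by
    rw [← sum_eq_single_of_mem i₀ (mem_univ _) fun i _ => hrow i, sum_comm]
    exact sum_eq_zero fun j _ => hcol j
  refine ⟨w, fun h => hz0 (funext fun e => ?_), hwF,
    fun i => (eq_or_ne i i₀).elim (· ▸ hrow₀) (hrow i), hcol⟩
  simpa [w, extend, Subtype.val_injective.extend_apply] using congr_fun₂ h e.1.1 e.1.2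

end Kernel

section Step

variable {K : Type*} [Field K] [LinearOrder K] [FloorRing K]

/-- First `t ≥ 0` at which `x + t * w` reaches `⌈x⌉` (if `0 < w`) or `⌊x⌋` (if `w < 0`);
the junk value for `w = 0` is `0`. -/
def hitTime (x w : K) : K :=
  if 0 < w then (⌈x⌉ - x) / w else (⌊x⌋ - x) / w

theorem add_hitTime_mul_mem_range (x : K) {w : K} (hw : w ≠ 0) :
    x + hitTime x w * w ∈ (Int.castAddHom K).range := by
  unfold hitTime
  split_ifs
  · exact ⟨⌈x⌉, by simp [div_mul_cancel₀ _ hw]⟩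
  · exact ⟨⌊x⌋, by simp [div_mul_cancel₀ _ hw]⟩

variable [IsStrictOrderedRing K]

theorem hitTime_nonneg (x w : K) : 0 ≤ hitTime x w := by
  unfold hitTime
  split_ifs with hw
  · exact div_nonneg (sub_nonneg.2 (Int.le_ceil x)) hw.le
  · exact div_nonneg_of_nonpos (sub_nonpos.2 (Int.floor_le x)) (not_lt.1 hw)

theorem floor_le_add_mul_and_le_ceil {x w t : K} (ht₀ : 0 ≤ t) (ht : t ≤ hitTime x w) :
    (⌊x⌋ : K) ≤ x + t * w ∧ x + t * w ≤ ⌈x⌉ := by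
  unfold hitTime at ht
  split_ifs at ht with hw
  · have := (le_div_iff₀ hw).1 ht
    constructor <;> nlinarith [Int.floor_le x]
  · rcases (not_lt.1 hw).lt_or_eq with hw | rfl
    · have := (le_div_iff_of_neg hw).1 ht
      constructor <;> nlinarith [Int.le_ceil x]
    · simp [Int.floor_le, Int.le_ceil]

theorem exists_floor_le_add_mul_le_ceil_and_mem_range {ι : Type*} (s : Finset ι) (x w : ι → K)
    (hw : ∃ e ∈ s, w e ≠ 0) :
    ∃ t : K, (∀ e ∈ s, (⌊x e⌋ : K) ≤ x e + t * w e ∧ x e + t * w e ≤ ⌈x e⌉) ∧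
      ∃ e ∈ s, x e + t * w e ∈ (Int.castAddHom K).range := by
  classical
  have hS : {e ∈ s | w e ≠ 0}.Nonempty := by simpa [Finset.Nonempty] using hw
  obtain ⟨e₀, he₀, hmin⟩ := exists_mem_eq_inf' hS fun e => hitTime (x e) (w e)
  have he₀' := mem_filter.1 he₀
  refine ⟨hitTime (x e₀) (w e₀), fun e he => ?_, e₀, he₀'.1,
    add_hitTime_mul_mem_range _ he₀'.2⟩
  by_cases hwe : w e = 0
  · simp [hwe, Int.floor_le, Int.le_ceil]
  · exact floor_le_add_mul_and_le_ceil (hitTime_nonneg _ _)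
      (hmin ▸ inf'_le _ (mem_filter.2 ⟨he, hwe⟩))

end Step

theorem AddSubgroup.exists_ne_notMem_of_sum_mem {ι G : Type*} [AddCommGroup G] [DecidableEq ι]
    (H : AddSubgroup G) {s : Finset ι} {f : ι → G} (hs : ∑ i ∈ s, f i ∈ H) {i₀ : ι}
    (hi₀ : i₀ ∈ s) (hf : f i₀ ∉ H) : ∃ i ∈ s, i ≠ i₀ ∧ f i ∉ H := by
  by_contra! h
  have hrest : ∑ i ∈ s.erase i₀, f i ∈ H :=
    H.sum_mem fun i hi => h i (mem_of_mem_erase hi) (ne_of_mem_erase hi)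
  rw [← add_sum_erase s f hi₀] at hs
  exact hf ((H.add_mem_cancel_right hrest).1 hs)

section FracSupport

variable {R C K : Type*} [Fintype R] [Fintype C]

open Classical in
noncomputable def fracSupport [Ring K] (x : R → C → K) : Finset (R × C) :=
  {e | x e.1 e.2 ∉ (Int.castAddHom K).range}

theorem mem_fracSupport [Ring K] {x : R → C → K} {e : R × C} :
    e ∈ fracSupport x ↔ x e.1 e.2 ∉ (Int.castAddHom K).range := by
  simp only [fracSupport, mem_filter, mem_univ, true_and]

theorem exists_intCast_eq_of_fracSupport_eq_empty [Ring K] {x : R → C → K}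
    (h : fracSupport x = ∅) : ∃ y : R → C → ℤ, ∀ i j, (y i j : K) = x i j := by
  choose y hy using fun i j => not_not.1 fun hx => (eq_empty_iff_forall_notMem.1 h) (i, j)
    (mem_fracSupport.2 hx)
  exact ⟨y, hy⟩

variable [DecidableEq R] [DecidableEq C]

theorem two_mul_card_image_fst_fracSupport_le [Ring K] {x : R → C → K}
    (hr : ∀ i, ∑ j, x i j ∈ (Int.castAddHom K).range) :
    2 * #((fracSupport x).image Prod.fst) ≤ #(fracSupport x) := by
  refine mul_card_image_le_card _ 2 fun i hi => ?_
  obtain ⟨⟨i, j₀⟩, he, rfl⟩ := mem_image.1 hi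
  obtain ⟨j, -, hj, hxj⟩ := AddSubgroup.exists_ne_notMem_of_sum_mem _ (hr i) (mem_univ j₀)
    (mem_fracSupport.1 he)
  exact one_lt_card.2 ⟨(i, j), mem_filter.2 ⟨mem_fracSupport.2 hxj, rfl⟩, (i, j₀),
    mem_filter.2 ⟨he, rfl⟩, by simp [hj]⟩

theorem two_mul_card_image_snd_fracSupport_le [Ring K] {x : R → C → K}
    (hc : ∀ j, ∑ i, x i j ∈ (Int.castAddHom K).range) :
    2 * #((fracSupport x).image Prod.snd) ≤ #(fracSupport x) := by
  refine mul_card_image_le_card _ 2 fun j hj => ?_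
  obtain ⟨⟨i₀, j⟩, he, rfl⟩ := mem_image.1 hj
  obtain ⟨i, -, hi, hxi⟩ := AddSubgroup.exists_ne_notMem_of_sum_mem _ (hc j) (mem_univ i₀)
    (mem_fracSupport.1 he)
  exact one_lt_card.2 ⟨(i, j), mem_filter.2 ⟨mem_fracSupport.2 hxi, rfl⟩, (i₀, j),
    mem_filter.2 ⟨he, rfl⟩, by simp [hi]⟩

variable [Field K] [LinearOrder K] [IsStrictOrderedRing K] [FloorRing K]

theorem exists_card_fracSupport_lt (x : R → C → K)
    (hr : ∀ i, ∑ j, x i j ∈ (Int.castAddHom K).range)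
    (hc : ∀ j, ∑ i, x i j ∈ (Int.castAddHom K).range) (hF : (fracSupport x).Nonempty) :
    ∃ x' : R → C → K, (∀ i j, (⌊x i j⌋ : K) ≤ x' i j ∧ x' i j ≤ ⌈x i j⌉) ∧
      (∀ i, ∑ j, x' i j = ∑ j, x i j) ∧ (∀ j, ∑ i, x' i j = ∑ i, x i j) ∧
      #(fracSupport x') < #(fracSupport x) := by
  set F := fracSupport x
  obtain ⟨w, hw, hwF, hwr, hwc⟩ := exists_ne_zero_rowSum_colSum_eq_zero (K := K) F hF (by
    have h₁ : 2 * #(F.image Prod.fst) ≤ #F := two_mul_card_image_fst_fracSupport_le hr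
    have h₂ : 2 * #(F.image Prod.snd) ≤ #F := two_mul_card_image_snd_fracSupport_le hc
    omega)
  have hwF' : ∃ e ∈ F, w e.1 e.2 ≠ 0 := by
    by_contra! h
    exact hw (funext₂ fun i j => if hij : (i, j) ∈ F then h _ hij else hwF i j hij)
  obtain ⟨t, hbd, e, heF, he⟩ :=
    exists_floor_le_add_mul_le_ceil_and_mem_range F (fun e => x e.1 e.2) (fun e => w e.1 e.2) hwF'
  refine ⟨fun i j => x i j + t * w i j, fun i j => ?_, fun i => ?_, fun j => ?_, ?_⟩
  · by_cases hij : (i, j) ∈ F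
    · exact hbd _ hij
    · simp [hwF i j hij, Int.floor_le, Int.le_ceil]
  · simp [sum_add_distrib, ← mul_sum, hwr]
  · simp [sum_add_distrib, ← mul_sum, hwc]
  · refine (card_le_card fun e' he' => mem_erase.2 ⟨?_, ?_⟩).trans_lt
      (card_erase_lt_of_mem heF)
    · rintro rfl
      exact mem_fracSupport.1 he' he
    · by_contra he'F
      have := mem_fracSupport.1 he'
      simp only [hwF _ _ he'F, mul_zero, add_zero] at this
      exact he'F (mem_fracSupport.2 this)

end FracSupport

section Transport

variable {R C K : Type*} [Fintype R] [Fintype C] [DecidableEq R] [DecidableEq C]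
  [Field K] [LinearOrder K] [IsStrictOrderedRing K] [FloorRing K]

theorem exists_int_of_rowSum_colSum_eq (a b : R → C → ℤ) (r : R → ℤ) (c : C → ℤ)
    (x : R → C → K) (hab : ∀ i j, (a i j : K) ≤ x i j ∧ x i j ≤ b i j)
    (hr : ∀ i, ∑ j, x i j = r i) (hc : ∀ j, ∑ i, x i j = c j) :
    ∃ y : R → C → ℤ, (∀ i j, a i j ≤ y i j ∧ y i j ≤ b i j) ∧
      (∀ i, ∑ j, y i j = r i) ∧ (∀ j, ∑ i, y i j = c j) := by
  induction hn : #(fracSupport x) using Nat.strong_induction_on generalizing x with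
  | _ n ih =>
    rcases (fracSupport x).eq_empty_or_nonempty with hF | hF
    · obtain ⟨y, hy⟩ := exists_intCast_eq_of_fracSupport_eq_empty hF
      refine ⟨y, fun i j => ?_, fun i => ?_, fun j => ?_⟩
      · exact_mod_cast hy i j ▸ hab i j
      · exact_mod_cast (by push_cast [hy]; exact hr i : ((∑ j, y i j : ℤ) : K) = r i)
      · exact_mod_cast (by push_cast [hy]; exact hc j : ((∑ i, y i j : ℤ) : K) = c j)
    · obtain ⟨x', hbd, hr', hc', hlt⟩ := exists_card_fracSupport_lt x
        (fun i => ⟨r i, (hr i).symm⟩) (fun j => ⟨c j, (hc j).symm⟩) hF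
      refine ih _ (hn ▸ hlt) x' (fun i j => ⟨?_, ?_⟩) (fun i => (hr' i).trans (hr i))
        (fun j => (hc' j).trans (hc j)) rfl
      · exact le_trans (by exact_mod_cast Int.le_floor.2 (hab i j).1) (hbd i j).1
      · exact (hbd i j).2.trans (by exact_mod_cast Int.ceil_le.2 (hab i j).2)

theorem exists_int_of_rowSum_eq_colSum_le (a b : R → C → ℤ) (r : R → ℤ) (c : C → ℤ)
    (x : R → C → K) (hab : ∀ i j, (a i j : K) ≤ x i j ∧ x i j ≤ b i j)
    (hr : ∀ i, ∑ j, x i j = r i) (hc : ∀ j, ∑ i, x i j ≤ c j) :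
    ∃ y : R → C → ℤ, (∀ i j, a i j ≤ y i j ∧ y i j ≤ b i j) ∧
      (∀ i, ∑ j, y i j = r i) ∧ (∀ j, ∑ i, y i j ≤ c j) := by
  -- Adjoin a slack row `none`, which turns the column inequalities into equalities.
  let a' (o : Option R) (j : C) : ℤ := o.elim 0 (a · j)
  let b' (o : Option R) (j : C) : ℤ := o.elim (c j - ∑ i, a i j) (b · j)
  let r' (o : Option R) : ℤ := o.elim (∑ j, c j - ∑ i, r i) r
  let x' (o : Option R) (j : C) : K := o.elim (c j - ∑ i, x i j) (x · j)
  have hab' : ∀ o j, (a' o j : K) ≤ x' o j ∧ x' o j ≤ b' o j := by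
    rintro (_ | i) j
    · have := sum_le_sum fun i (_ : i ∈ univ) => (hab i j).1
      simp only [a', b', x', Option.elim]
      push_cast
      constructor <;> linarith [hc j]
    · exact hab i j
  have hr' : ∀ o, ∑ j, x' o j = r' o := by
    rintro (_ | i)
    · simp only [x', r', Option.elim, sum_sub_distrib]
      push_cast
      rw [sum_comm]
      simp [hr]
    · exact hr i
  have hc' : ∀ j, ∑ o, x' o j = c j := fun j => by simp [x', Fintype.sum_option]
  obtain ⟨y, hyab, hyr, hyc⟩ := exists_int_of_rowSum_colSum_eq a' b' r' c x' hab' hr' hc'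
  refine ⟨fun i j => y (some i) j, fun i j => hyab (some i) j, fun i => hyr (some i),
    fun j => ?_⟩
  have hslack : 0 ≤ y none j := (hyab none j).1
  have hcol := hyc j
  rw [Fintype.sum_option] at hcol
  show ∑ i, y (some i) j ≤ c j
  omega

end Transport

theorem integrality_lemma_with_upper_bounds_general (N1 N2 : ℕ)
    (Lvar : Set (Fin N1 × Fin N2)) (α : Fin N1 → ℕ) (β : Fin N2 → ℕ)
    (γ : Fin N1 × Fin N2 → ℤ) (U : Fin N1 → Fin N2 → ℕ)
    (h : ∃ n : Fin N1 → Fin N2 → ℝ,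
      (∀ l1 l2, 0 ≤ n l1 l2 ∧ n l1 l2 ≤ (U l1 l2 : ℝ)) ∧
      (∀ l1, ∑ l2, n l1 l2 = (α l1 : ℝ)) ∧
      (∀ l2, ∑ l1, n l1 l2 ≤ (β l2 : ℝ)) ∧
      (∀ l1 l2, (l1, l2) ∈ Lvar → n l1 l2 = (γ (l1, l2) : ℝ))) :
    ∃ n' : Fin N1 → Fin N2 → ℤ,
      (∀ l1 l2, 0 ≤ n' l1 l2 ∧ n' l1 l2 ≤ (U l1 l2 : ℤ)) ∧
      (∀ l1, ∑ l2, n' l1 l2 = (α l1 : ℤ)) ∧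
      (∀ l2, ∑ l1, n' l1 l2 ≤ (β l2 : ℤ)) ∧
      (∀ l1 l2, (l1, l2) ∈ Lvar → n' l1 l2 = γ (l1, l2)) := by
  classical
  obtain ⟨n, hbd, hrow, hcol, hvar⟩ := h
  have hγ : ∀ l1 l2, (l1, l2) ∈ Lvar → 0 ≤ γ (l1, l2) ∧ γ (l1, l2) ≤ U l1 l2 :=
    fun l1 l2 hl => by exact_mod_cast hvar l1 l2 hl ▸ hbd l1 l2
  -- Variables in `Lvar` are pinned by equal lower and upper bounds.
  obtain ⟨n', hbd', hrow', hcol'⟩ := exists_int_of_rowSum_eq_colSum_le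
    (fun l1 l2 => if (l1, l2) ∈ Lvar then γ (l1, l2) else 0)
    (fun l1 l2 => if (l1, l2) ∈ Lvar then γ (l1, l2) else U l1 l2) (α ·) (β ·) n
    (fun l1 l2 => by split_ifs with hl <;> simp [hvar l1 l2, hl, hbd l1 l2])
    (fun l1 => by exact_mod_cast hrow l1) (fun l2 => by exact_mod_cast hcol l2)
  have hvar' : ∀ l1 l2, (l1, l2) ∈ Lvar → n' l1 l2 = γ (l1, l2) := fun l1 l2 hl =>
    le_antisymm (by simpa [hl] using (hbd' l1 l2).2) (by simpa [hl] using (hbd' l1 l2).1)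
  refine ⟨n', fun l1 l2 => ?_, hrow', hcol', hvar'⟩
  by_cases hl : (l1, l2) ∈ Lvar
  · exact hvar' l1 l2 hl ▸ hγ l1 l2 hl
  · simpa [hl] using hbd' l1 l2

/-- **Remark 1.** The integrality lemma continues to hold when each variable also has a
positive integer upper bound `U l1 l2`. -/
theorem integrality_lemma_with_upper_bounds (N1 N2 : ℕ) (hN1 : 0 < N1) (hN2 : 0 < N2)
    (Lvar : Set (Fin N1 × Fin N2)) (α : Fin N1 → ℕ) (β : Fin N2 → ℕ)
    (γ : Fin N1 × Fin N2 → ℤ) (U : Fin N1 → Fin N2 → ℕ) (hU : ∀ l1 l2, 0 < U l1 l2)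
    (h : ∃ n : Fin N1 → Fin N2 → ℝ,
      (∀ l1 l2, 0 ≤ n l1 l2 ∧ n l1 l2 ≤ (U l1 l2 : ℝ)) ∧
      (∀ l1, ∑ l2, n l1 l2 = (α l1 : ℝ)) ∧
      (∀ l2, ∑ l1, n l1 l2 ≤ (β l2 : ℝ)) ∧
      (∀ l1 l2, (l1, l2) ∈ Lvar → n l1 l2 = (γ (l1, l2) : ℝ))) :
    ∃ n' : Fin N1 → Fin N2 → ℤ,
      (∀ l1 l2, 0 ≤ n' l1 l2 ∧ n' l1 l2 ≤ (U l1 l2 : ℤ)) ∧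
      (∀ l1, ∑ l2, n' l1 l2 = (α l1 : ℤ)) ∧
      (∀ l2, ∑ l1, n' l1 l2 ≤ (β l2 : ℤ)) ∧
      (∀ l1 l2, (l1, l2) ∈ Lvar → n' l1 l2 = γ (l1, l2)) :=
  integrality_lemma_with_upper_bounds_general N1 N2 Lvar α β γ U h
end

section
/- Let A be a totally unimodular m×n matrix and b ∈ ℤ^m an integer vector. If there exists x ∈ ℝ^n with A·x ≤ b (componentwise), and the polyhedron {x : A·x ≤ b} has at least one vertex (e.g., it is pointed), then there exists an integer vector x' ∈ ℤ^n with A·x' ≤ b. In particular, if A contains the rows of −I_n (so the polyhedron is bounded below by 0 and pointed), feasibility over the reals implies feasibility over the integers. -/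
/-! At a vertex `v` of `{x | A x ≤ b}`, no nonzero direction `d` is annihilated by all tight rows:
otherwise `v ± t d` stays in the polyhedron for small `t`, and `v` is the midpoint of that
segment. So the tight rows have full column rank and contain an invertible square submatrix `B`,
with `B v = b_B`. Total unimodularity gives `det B = ±1`, hence `v = B⁻¹ b_B` is integral. -/

def IsTotUnimodular {M N : Type*} (A : Matrix M N ℤ) : Prop :=
  ∀ (k : ℕ) (r : Fin k → M) (c : Fin k → N), Function.Injective r → Function.Injective c →
    (A.submatrix r c).det ∈ ({-1, 0, 1} : Set ℤ)

open Matrix Filter Topology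

theorem eq_zero_of_mem_extremePoints_of_eventually_add_smul_mem {E : Type*} [AddCommGroup E]
    [Module ℝ E] {P : Set E} {v d : E} (hv : v ∈ P.extremePoints ℝ)
    (hd : ∀ᶠ t in 𝓝 (0 : ℝ), v + t • d ∈ P) : d = 0 := by
  obtain ⟨ε, hε, hball⟩ := Metric.eventually_nhds_iff.1 hd
  have hmem : ∀ s : ℝ, |s| < ε → v + s • d ∈ P := fun s hs => hball (by simpa using hs)
  have hpos : v + (ε / 2) • d ∈ P := hmem _ (by rw [abs_of_pos (by positivity)]; linarith)
  have hneg : v + (-(ε / 2)) • d ∈ P :=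
    hmem _ (by rw [abs_neg, abs_of_pos (by positivity)]; linarith)
  have hseg : v ∈ openSegment ℝ (v + (ε / 2) • d) (v + (-(ε / 2)) • d) :=
    ⟨1 / 2, 1 / 2, by norm_num, by norm_num, by norm_num, by module⟩
  have hsmul : (ε / 2) • d = 0 := by simpa using hv.2 hpos hneg hseg
  exact (smul_eq_zero.1 hsmul).resolve_left (by positivity)

section Polyhedron

variable {ι σ : Type*} [Fintype σ] {M : Matrix ι σ ℝ} {c : ι → ℝ} {v d : σ → ℝ}

theorem Matrix.eventually_mulVec_add_smul_le [Finite ι] (hv : M *ᵥ v ≤ c)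
    (hd : ∀ i, (M *ᵥ v) i = c i → (M *ᵥ d) i = 0) :
    ∀ᶠ t in 𝓝 (0 : ℝ), M *ᵥ (v + t • d) ≤ c := by
  simp only [Pi.le_def, mulVec_add, mulVec_smul, Pi.add_apply, Pi.smul_apply, smul_eq_mul]
  refine eventually_all.2 fun i => ?_
  rcases (hv i).eq_or_lt with htight | hslack
  · exact Eventually.of_forall fun t => by simp [hd i htight, htight]
  · have hcont :
        Tendsto (fun t : ℝ => (M *ᵥ v) i + t * (M *ᵥ d) i) (𝓝 0) (𝓝 ((M *ᵥ v) i)) :=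
      Continuous.tendsto' (by fun_prop) 0 _ (by simp)
    exact (hcont.eventually (gt_mem_nhds hslack)).mono fun _ => le_of_lt

theorem Matrix.eq_zero_of_mem_extremePoints [Finite ι]
    (hv : v ∈ {x | M *ᵥ x ≤ c}.extremePoints ℝ)
    (hd : ∀ i, (M *ᵥ v) i = c i → (M *ᵥ d) i = 0) : d = 0 :=
  eq_zero_of_mem_extremePoints_of_eventually_add_smul_mem hv
    (eventually_mulVec_add_smul_le hv.1 hd)

theorem Matrix.mulVec_injective_of_mem_extremePoints [Finite ι]
    (hv : v ∈ {x | M *ᵥ x ≤ c}.extremePoints ℝ) :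
    Function.Injective (M.submatrix ((↑) : {i // (M *ᵥ v) i = c i} → ι) id).mulVec := by
  intro x y hxy
  rw [← sub_eq_zero]
  refine eq_zero_of_mem_extremePoints hv fun i hi => ?_
  rw [mulVec_sub, Pi.sub_apply, sub_eq_zero]
  exact congrFun hxy ⟨i, hi⟩

end Polyhedron

theorem Matrix.exists_isUnit_submatrix_of_mulVec_injective {ι σ K : Type*} [Field K] [Finite ι]
    [Fintype σ] [DecidableEq σ] {M : Matrix ι σ K} (hM : Function.Injective M.mulVec) :
    ∃ r : σ → ι, Function.Injective r ∧ IsUnit (M.submatrix r id) := by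
  have hrank :
      Module.finrank K (Submodule.span K (Set.range M.row)) = Module.finrank K (σ → K) := by
    rw [← rank_eq_finrank_span_row, rank, LinearMap.finrank_range_of_inj hM]
  have hspan := Submodule.eq_top_of_finrank_eq hrank
  obtain ⟨κ, a, ha, haspan, hali⟩ := exists_linearIndependent' K M.row
  let basis := Module.Basis.mk hali (by rw [haspan, hspan])
  let e := (Pi.basisFun K σ).indexEquiv basis
  refine ⟨a ∘ e, ha.comp e.injective, ?_⟩
  rw [← linearIndependent_rows_iff_isUnit]
  exact hali.comp e e.injective

theorem Matrix.eq_comp_nonsing_inv_mulVec_of_map_mulVec_eq {σ R S : Type*} [Fintype σ]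
    [DecidableEq σ] [CommRing R] [CommRing S] (f : R →+* S) {B : Matrix σ σ R}
    (hB : IsUnit B.det) {v : σ → S} {b : σ → R} (hv : B.map f *ᵥ v = f ∘ b) :
    v = f ∘ (B⁻¹ *ᵥ b) := by
  have hBf : IsUnit (B.map f).det := by simpa [RingHom.map_det] using hB.map f
  have hsol : B.map f *ᵥ (f ∘ (B⁻¹ *ᵥ b)) = f ∘ b := by
    funext i
    rw [← RingHom.map_mulVec, mulVec_mulVec, mul_nonsing_inv _ hB, one_mulVec,
      Function.comp_apply]
  calc v = ((B.map f)⁻¹ * B.map f) *ᵥ v := by rw [nonsing_inv_mul _ hBf, one_mulVec]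
    _ = ((B.map f)⁻¹ * B.map f) *ᵥ (f ∘ (B⁻¹ *ᵥ b)) := by
      rw [← mulVec_mulVec, ← mulVec_mulVec, hv, hsol]
    _ = f ∘ (B⁻¹ *ᵥ b) := by rw [nonsing_inv_mul _ hBf, one_mulVec]

theorem IsTotUnimodular.isUnit_det_submatrix {M N : Type*} {A : Matrix M N ℤ}
    (hA : IsTotUnimodular A) {k : ℕ} {r : Fin k → M} {c : Fin k → N}
    (hr : Function.Injective r) (hc : Function.Injective c)
    (h0 : (A.submatrix r c).det ≠ 0) : IsUnit (A.submatrix r c).det := by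
  rcases hA k r c hr hc with h | h | h
  · rw [h]; exact isUnit_one.neg
  · exact absurd h h0
  · rw [h]; exact isUnit_one

theorem IsTotUnimodular.exists_eq_intCast_of_mem_extremePoints {ι : Type*} [Finite ι] {n : ℕ}
    {A : Matrix ι (Fin n) ℤ} (hA : IsTotUnimodular A) {b : ι → ℤ} {v : Fin n → ℝ}
    (hv : v ∈ {x | A.map ((↑) : ℤ → ℝ) *ᵥ x ≤ (↑) ∘ b}.extremePoints ℝ) :
    ∃ z : Fin n → ℤ, v = (↑) ∘ z := by
  obtain ⟨r, hr, hunit⟩ :=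
    exists_isUnit_submatrix_of_mulVec_injective (mulVec_injective_of_mem_extremePoints hv)
  set B := A.submatrix (Subtype.val ∘ r) id
  have hBℝ : IsUnit (B.map ((↑) : ℤ → ℝ)).det := (isUnit_iff_isUnit_det _).1 hunit
  have hB : IsUnit B.det :=
    hA.isUnit_det_submatrix (Subtype.val_injective.comp hr) Function.injective_id
      fun h0 => hBℝ.ne_zero (by rw [← Int.cast_det, h0, Int.cast_zero])
  exact ⟨B⁻¹ *ᵥ (b ∘ Subtype.val ∘ r), eq_comp_nonsing_inv_mulVec_of_map_mulVec_eq
    (Int.castRingHom ℝ) hB (funext fun k => (r k).2)⟩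

theorem integer_feasibility_of_TU_general {m n : ℕ} (A : Matrix (Fin m) (Fin n) ℤ)
    (hA : IsTotUnimodular A) (b : Fin m → ℤ)
    (P : Set (Fin n → ℝ))
    (hP : P = {x : Fin n → ℝ | ∀ i, ∑ j, (A i j : ℝ) * x j ≤ (b i : ℝ)})
    (hvertex : (Set.extremePoints ℝ P).Nonempty) :
    ∃ x' : Fin n → ℤ, ∀ i, ∑ j, A i j * x' j ≤ b i := by
  obtain ⟨v, hv⟩ := hvertex
  subst hP
  obtain ⟨z, rfl⟩ := hA.exists_eq_intCast_of_mem_extremePoints (b := b) hv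
  refine ⟨z, fun i => ?_⟩
  have hzi : ∑ j, (A i j : ℝ) * z j ≤ b i := hv.1 i
  exact_mod_cast hzi

/-- **Hoffman–Kruskal instance.** If `A` is totally unimodular, `b` is an integer vector,
the polyhedron `P = {x : Ax ≤ b}` is nonempty (real feasibility) and has at least one
vertex (an extreme point), then there is an integer point `x'` with `A x' ≤ b`. -/
theorem integer_feasibility_of_TU {m n : ℕ} (A : Matrix (Fin m) (Fin n) ℤ)
    (hA : IsTotUnimodular A) (b : Fin m → ℤ)
    (P : Set (Fin n → ℝ))
    (hP : P = {x : Fin n → ℝ | ∀ i, ∑ j, (A i j : ℝ) * x j ≤ (b i : ℝ)})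
    (hfeas : P.Nonempty)
    (hvertex : (Set.extremePoints ℝ P).Nonempty) :
    ∃ x' : Fin n → ℤ, ∀ i, ∑ j, A i j * x' j ≤ b i :=
  integer_feasibility_of_TU_general A hA b P hP hvertex
end

section
/- Let J be a finite set and for each j ∈ J let M_j = [a_j, b_j] be a closed real interval. For a fixed real C ≥ 0, the condition ∑_{j ∈ J} 1(t ∈ M_j) ≤ C holds for all t ∈ ℝ if and only if it holds at every left endpoint t = a_j, j ∈ J. -/
open Finset in
/-- **Capacity checking at left endpoints.** For finitely many closed intervals
`[a j, b j]` and a capacity `C ≥ 0`, the occupancy bound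
`∑_j 1(t ∈ [a j, b j]) ≤ C` holds for all `t ∈ ℝ` iff it holds at every left
endpoint `t = a j`. -/
theorem capacity_check_left_endpoints {J : Type*} [Fintype J]
    (a b : J → ℝ) (hab : ∀ j, a j ≤ b j) (C : ℝ) (hC : 0 ≤ C) :
    (∀ t : ℝ, ((univ.filter fun j => a j ≤ t ∧ t ≤ b j).card : ℝ) ≤ C) ↔
    (∀ j0 : J, ((univ.filter fun j => a j ≤ a j0 ∧ a j0 ≤ b j).card : ℝ) ≤ C) := by
  constructor
  · intro h j0; exact h (a j0)
  · intro h t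
    set S := univ.filter fun j => a j ≤ t ∧ t ≤ b j with hS
    rcases S.eq_empty_or_nonempty with he | hne
    · simp [he, hC]
    · obtain ⟨j0, hj0, hmax⟩ := S.exists_max_image a hne
      have hj0' := (mem_filter.mp hj0).2
      calc (S.card : ℝ) ≤ ((univ.filter fun j => a j ≤ a j0 ∧ a j0 ≤ b j).card : ℝ) := by
            refine Nat.cast_le.mpr (card_le_card ?_)
            intro j hj
            have hj' := (mem_filter.mp hj).2
            exact mem_filter.mpr ⟨mem_univ _, hmax j hj, le_trans hj0'.1 hj'.2⟩
        _ ≤ C := h j0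
end
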